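/- Let J ⊆ {1,…,N} with |J| = n, 1 ≤ n < p, and suppose P(J ⊆ φ) > 0. Then the conditional process (φ | J ⊆ φ) ∖ J is determinantal: there exists a (p − n) × N real matrix W with orthonormal rows, each row having all coordinates indexed by J equal to zero, such that for every K ⊆ {1,…,N} ∖ J, Σ_{|S| = p, J ∪ K ⊆ S} det(Z_S)² = (Σ_{|S| = p, J ⊆ S} det(Z_S)²) · (Σ_{|T| = p − n, K ⊆ T} det(W_T)²); that is, P(K ⊆ φ ∖ J | J ⊆ φ) = P(K ⊆ φ(W)) for the determinantal process φ(W). -/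

import Mathlib

open Matrix Finset Equiv Equiv.Perm Function

variable {q N : ℕ}

private lemma cb_aux (A : Matrix (Fin q) (Fin N) ℝ) (B : Matrix (Fin N) (Fin q) ℝ)
    {f : Fin q → Fin N} (H : ¬Function.Injective f) :
    (∑ σ : Equiv.Perm (Fin q),
      ((Equiv.Perm.sign σ : ℤ) : ℝ) * ∏ x, A (σ x) (f x) * B (f x) x) = 0 := by
  obtain ⟨i, j, hfij, hij⟩ : ∃ i j, f i = f j ∧ i ≠ j := by
    rw [Function.Injective] at H
    push_neg at H
    obtain ⟨i, j, h1, h2⟩ := H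
    exact ⟨i, j, h1, h2⟩
  exact
    Finset.sum_involution (fun σ _ => σ * Equiv.swap i j)
      (fun σ _ => by
        have : (∏ x, A (σ x) (f x)) = ∏ x, A ((σ * Equiv.swap i j) x) (f x) :=
          Fintype.prod_equiv (swap i j) _ _ (by simp [apply_swap_eq_self hfij])
        simp [this, sign_swap hij, -sign_swap', prod_mul_distrib])
      (fun σ _ _ => (not_congr mul_swap_eq_iff).mpr hij) (fun _ _ => mem_univ _) fun σ _ =>
      mul_swap_involutive i j σ

/-- The permutation sorting an injective `f : Fin q → Fin N` relative to its image. -/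
noncomputable def permOf (f : Fin q → Fin N) (hf : Function.Injective f) : Equiv.Perm (Fin q) := by
  have hc : (Finset.image f Finset.univ).card = q := by
    rw [Finset.card_image_of_injective _ hf, Finset.card_univ, Fintype.card_fin]
  refine Equiv.ofBijective
    (fun i => ((Finset.image f Finset.univ).orderIsoOfFin hc).symm
      ⟨f i, Finset.mem_image_of_mem f (Finset.mem_univ i)⟩) ?_
  rw [← Finite.injective_iff_bijective]
  intro a b h
  apply hf
  have := congrArg (fun z => (((Finset.image f Finset.univ).orderIsoOfFin hc) z : Fin N)) h
  simpa using this

lemma permOf_spec (f : Fin q → Fin N) (hf : Function.Injective f)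
    (hc : (Finset.image f Finset.univ).card = q) (i : Fin q) :
    (((Finset.image f Finset.univ).orderIsoOfFin hc) (permOf f hf i) : Fin N) = f i := by
  simp [permOf]

lemma orderIso_coe_congr {S S' : Finset (Fin N)} (e : S = S') (hS : S.card = q) (k : Fin q) :
    ((S.orderIsoOfFin hS k : Fin N)) = ((S'.orderIsoOfFin (e ▸ hS) k : Fin N)) := by
  subst e; rfl

theorem cauchyBinet (A : Matrix (Fin q) (Fin N) ℝ) (B : Matrix (Fin N) (Fin q) ℝ) :
    det (A * B) = ∑ T : Finset (Fin N), if h : T.card = q then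
      det (A.submatrix id (fun k => (T.orderIsoOfFin h k : Fin N))) *
      det (B.submatrix (fun k => (T.orderIsoOfFin h k : Fin N)) id) else 0 := by
  classical
  set F : (Fin q → Fin N) → ℝ := fun f =>
    ∑ σ : Equiv.Perm (Fin q), ((Equiv.Perm.sign σ : ℤ) : ℝ) * ∏ i, A (σ i) (f i) * B (f i) i
    with hF
  set G : Finset (Fin N) × Equiv.Perm (Fin q) → ℝ := fun x =>
    if h : x.1.card = q then F (fun i => (x.1.orderIsoOfFin h (x.2 i) : Fin N)) else 0 with hG
  have inner : ∀ (T : Finset (Fin N)) (hT : T.card = q),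
      (∑ π : Equiv.Perm (Fin q), G (T, π)) =
        det (A.submatrix id (fun k => (T.orderIsoOfFin hT k : Fin N))) *
        det (B.submatrix (fun k => (T.orderIsoOfFin hT k : Fin N)) id) := by
    intro T hT
    set g : Fin q → Fin N := fun k => (T.orderIsoOfFin hT k : Fin N) with hg
    have hGval : ∀ π : Equiv.Perm (Fin q), G (T, π) =
        det (A.submatrix id g) * (((Equiv.Perm.sign π : ℤ) : ℝ) * ∏ i, B (g (π i)) i) := by
      intro π
      have h1 : (∑ σ : Equiv.Perm (Fin q), ((Equiv.Perm.sign σ : ℤ) : ℝ) *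
          ∏ i, A (σ i) (g (π i))) = det ((A.submatrix id g).submatrix id ⇑π) := by
        rw [det_apply']; rfl
      have h2 : det ((A.submatrix id g).submatrix id ⇑π) =
          ((Equiv.Perm.sign π : ℤ) : ℝ) * det (A.submatrix id g) := by
        rw [det_permute']
      calc G (T, π) = ∑ σ : Equiv.Perm (Fin q), (((Equiv.Perm.sign σ : ℤ) : ℝ) *
              ∏ i, A (σ i) (g (π i))) * ∏ i, B (g (π i)) i := by
            rw [hG]; simp only [dif_pos hT]
            rw [hF]
            refine Finset.sum_congr rfl fun σ _ => ?_
            rw [Finset.prod_mul_distrib, mul_assoc]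
        _ = (∑ σ : Equiv.Perm (Fin q), ((Equiv.Perm.sign σ : ℤ) : ℝ) *
              ∏ i, A (σ i) (g (π i))) * ∏ i, B (g (π i)) i := by rw [← Finset.sum_mul]
        _ = det (A.submatrix id g) * (((Equiv.Perm.sign π : ℤ) : ℝ) * ∏ i, B (g (π i)) i) := by
            rw [h1, h2]; ring
    rw [Finset.sum_congr rfl fun π _ => hGval π, ← Finset.mul_sum]
    congr 1
    rw [det_apply']
    rfl
  calc det (A * B)
      = ∑ f : Fin q → Fin N, F f := by
        simp only [det_apply', Matrix.mul_apply, Finset.prod_univ_sum, Finset.mul_sum,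
          Fintype.piFinset_univ, hF]
        rw [Finset.sum_comm]
    _ = ∑ f ∈ Finset.univ.filter (fun f : Fin q → Fin N => Function.Injective f), F f := by
        refine (Finset.sum_subset (Finset.filter_subset _ _) fun f _ hbij => ?_).symm
        exact cb_aux A B (by simpa using hbij)
    _ = ∑ x ∈ (Finset.univ.filter (fun T : Finset (Fin N) => T.card = q)) ×ˢ
          (Finset.univ : Finset (Equiv.Perm (Fin q))), G x := by
        have hcimg : ∀ (f : Fin q → Fin N), Function.Injective f →
            (Finset.image f Finset.univ).card = q := fun f hf => by
          rw [Finset.card_image_of_injective _ hf, Finset.card_univ, Fintype.card_fin]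
        refine Finset.sum_bij (fun f hf =>
          (Finset.image f Finset.univ, permOf f (Finset.mem_filter.mp hf).2)) ?_ ?_ ?_ ?_
        · intro f hf
          have hinj := (Finset.mem_filter.mp hf).2
          exact Finset.mem_product.mpr ⟨Finset.mem_filter.mpr ⟨Finset.mem_univ _, hcimg f hinj⟩,
            Finset.mem_univ _⟩
        · intro f₁ hf₁ f₂ hf₂ h
          have hinj₁ := (Finset.mem_filter.mp hf₁).2
          have hinj₂ := (Finset.mem_filter.mp hf₂).2
          have he : Finset.image f₁ Finset.univ = Finset.image f₂ Finset.univ :=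
            congrArg Prod.fst h
          have hpe : HEq (permOf f₁ hinj₁) (permOf f₂ hinj₂) := by
            rw [Prod.ext_iff] at h; exact heq_of_eq h.2
          have hpe' : permOf f₁ hinj₁ = permOf f₂ hinj₂ := eq_of_heq hpe
          funext x
          rw [← permOf_spec f₁ hinj₁ (hcimg f₁ hinj₁) x, ← permOf_spec f₂ hinj₂ (hcimg f₂ hinj₂) x,
            ← hpe']
          exact orderIso_coe_congr he (hcimg f₁ hinj₁) _
        · rintro ⟨T, π⟩ hb
          have hT : T.card = q := (Finset.mem_filter.mp (Finset.mem_product.mp hb).1).2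
          set f : Fin q → Fin N := fun i => (T.orderIsoOfFin hT (π i) : Fin N) with hf
          have hinj : Function.Injective f := by
            intro a b h
            exact π.injective ((T.orderIsoOfFin hT).injective (Subtype.coe_injective h))
          have himg : Finset.image f Finset.univ = T := by
            ext x
            constructor
            · intro hx
              obtain ⟨i, _, rfl⟩ := Finset.mem_image.mp hx
              exact (T.orderIsoOfFin hT (π i)).2
            · intro hx
              refine Finset.mem_image.mpr ⟨π.symm ((T.orderIsoOfFin hT).symm ⟨x, hx⟩),
                Finset.mem_univ _, ?_⟩
              show ((T.orderIsoOfFin hT) (π (π.symm ((T.orderIsoOfFin hT).symm ⟨x, hx⟩))) : Fin N)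
                = x
              rw [Equiv.apply_symm_apply, OrderIso.apply_symm_apply]
          refine ⟨f, Finset.mem_filter.mpr ⟨Finset.mem_univ _, hinj⟩, ?_⟩
          refine Prod.ext himg ?_
          refine Equiv.ext fun i => ?_
          have : f i = ((Finset.image f Finset.univ).orderIsoOfFin (hcimg f hinj)
              (permOf f hinj i) : Fin N) := (permOf_spec f hinj (hcimg f hinj) i).symm
          rw [orderIso_coe_congr himg (hcimg f hinj) (permOf f hinj i)] at this
          have h2 : T.orderIsoOfFin hT (π i) = T.orderIsoOfFin (himg ▸ hcimg f hinj)
              (permOf f hinj i) := Subtype.ext this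
          have h3 : T.orderIsoOfFin (himg ▸ hcimg f hinj) = T.orderIsoOfFin hT := rfl
          rw [h3] at h2
          exact ((T.orderIsoOfFin hT).injective h2).symm
        · intro f hf
          have hinj := (Finset.mem_filter.mp hf).2
          rw [hG]
          simp only [dif_pos (hcimg f hinj)]
          congr 1
          funext i
          rw [permOf_spec f hinj (hcimg f hinj) i]
    _ = ∑ T ∈ Finset.univ.filter (fun T : Finset (Fin N) => T.card = q),
          ∑ π : Equiv.Perm (Fin q), G (T, π) := by
        rw [Finset.sum_product]
    _ = ∑ T ∈ Finset.univ.filter (fun T : Finset (Fin N) => T.card = q),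
          (if h : T.card = q then
            det (A.submatrix id (fun k => (T.orderIsoOfFin h k : Fin N))) *
            det (B.submatrix (fun k => (T.orderIsoOfFin h k : Fin N)) id) else 0) := by
        refine Finset.sum_congr rfl fun T hT => ?_
        have hT' : T.card = q := (Finset.mem_filter.mp hT).2
        rw [dif_pos hT', inner T hT']
    _ = ∑ T : Finset (Fin N), (if h : T.card = q then
            det (A.submatrix id (fun k => (T.orderIsoOfFin h k : Fin N))) *
            det (B.submatrix (fun k => (T.orderIsoOfFin h k : Fin N)) id) else 0) := by
        refine Finset.sum_subset (Finset.filter_subset _ _) fun T _ hT => ?_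
        rw [dif_neg]
        intro h
        exact hT (Finset.mem_filter.mpr ⟨Finset.mem_univ _, h⟩)

/-- Squared determinant of the submatrix of `Z` formed by the columns indexed by `S`,
when `S` has exactly `q` elements; `0` otherwise. -/
noncomputable def detSq {q N : ℕ} (Z : Matrix (Fin q) (Fin N) ℝ) (S : Finset (Fin N)) : ℝ :=
  if h : S.card = q then
    (Matrix.det (Matrix.of fun i j : Fin q => Z i ((S.orderIsoOfFin h j : Fin N)))) ^ 2
  else 0

open scoped Classical in
/-- `prDP Z E` is the probability that the determinantal process associated to the
matrix `Z` (with orthonormal rows) belongs to the family `E` of subsets of `{1,…,N}`: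
`P(φ(Z) ∈ E) = Σ_{|S| = q, S ∈ E} det(Z_S)²`. -/
noncomputable def prDP {q N : ℕ} (Z : Matrix (Fin q) (Fin N) ℝ)
    (E : Set (Finset (Fin N))) : ℝ :=
  ∑ S : Finset (Fin N), if S ∈ E then detSq Z S else 0

lemma sum_detSq_eq_one (W : Matrix (Fin q) (Fin N) ℝ) (hW : W * Wᵀ = 1) :
    ∑ T : Finset (Fin N), detSq W T = 1 := by
  have hcb := cauchyBinet W Wᵀ
  rw [hW, det_one] at hcb
  rw [hcb]
  refine Finset.sum_congr rfl fun T _ => ?_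
  by_cases h : T.card = q
  · rw [dif_pos h, detSq, dif_pos h]
    have h1 : (Wᵀ.submatrix (fun k => ((T.orderIsoOfFin h k : Fin N))) id) =
        (W.submatrix id (fun k => ((T.orderIsoOfFin h k : Fin N))))ᵀ := rfl
    rw [h1, det_transpose]
    have h2 : (Matrix.of fun i j : Fin q => W i ((T.orderIsoOfFin h j : Fin N))) =
        W.submatrix id (fun k => ((T.orderIsoOfFin h k : Fin N))) := rfl
    rw [h2, pow_two]
  · rw [dif_neg h, detSq, dif_neg h]

/-- Proposition 1, (3): if |J| = n < p and P(J ⊆ φ) > 0, then the conditional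
process (φ | J ⊆ φ) ∖ J is determinantal, associated to a (p − n) × N matrix W with
orthonormal rows all supported outside J. -/
theorem conditional_contains_determinantal {N p n : ℕ} (hp : 1 < p) (hpN : p < N)
    (Z : Matrix (Fin p) (Fin N) ℝ) (hZ : Z * Zᵀ = 1)
    (J : Finset (Fin N)) (hJcard : J.card = n) (hn1 : 1 ≤ n) (hnp : n < p)
    (hpos : 0 < prDP Z {S | J ⊆ S}) :
    ∃ W : Matrix (Fin (p - n)) (Fin N) ℝ, W * Wᵀ = 1 ∧
      (∀ i, ∀ j ∈ J, W i j = 0) ∧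
      ∀ K : Finset (Fin N), Disjoint K J →
        prDP Z {S | J ∪ K ⊆ S} = prDP Z {S | J ⊆ S} * prDP W {T | K ⊆ T} := by
  classical
  -- the coordinate functional map
  let f : EuclideanSpace ℝ (Fin p) →ₗ[ℝ] (↥J → ℝ) :=
    { toFun := fun x => fun j => ∑ i, x i * Z i j
      map_add' := by
        intro x y
        funext j
        simp only [PiLp.add_apply, add_mul, Pi.add_apply]
        rw [Finset.sum_add_distrib]
      map_smul' := by
        intro c x
        funext j
        simp only [PiLp.smul_apply, smul_eq_mul, RingHom.id_apply, Pi.smul_apply]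
        rw [Finset.mul_sum]
        exact Finset.sum_congr rfl fun i _ => by ring }
  set V := LinearMap.ker f with hV
  have hfin : p - n ≤ Module.finrank ℝ ↥V := by
    have h1 := LinearMap.finrank_range_add_finrank_ker f
    rw [← hV] at h1
    have h2 : Module.finrank ℝ ↥(LinearMap.range f) ≤ n := by
      refine le_trans (Submodule.finrank_le _) ?_
      rw [Module.finrank_fintype_fun_eq_card, Fintype.card_coe, hJcard]
    have h3 : Module.finrank ℝ (EuclideanSpace ℝ (Fin p)) = p := finrank_euclideanSpace_fin
    omega
  set d := Module.finrank ℝ ↥V with hd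
  let bV : OrthonormalBasis (Fin d) ℝ ↥V := stdOrthonormalBasis ℝ ↥V
  let v : Fin p → EuclideanSpace ℝ (Fin p) := fun i =>
    if h : n ≤ (i : ℕ) then (bV ⟨(i : ℕ) - n, by have := i.isLt; omega⟩ : EuclideanSpace ℝ (Fin p)) else 0
  have hv_mem : ∀ (i : Fin p), n ≤ (i : ℕ) → v i ∈ V := by
    intro i h
    simp only [v, dif_pos h]
    exact (bV _).2
  have hon : Orthonormal ℝ (Set.restrict {i : Fin p | n ≤ (i : ℕ)} v) := by
    rw [orthonormal_iff_ite]
    rintro ⟨i, hi⟩ ⟨j, hj⟩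
    have hi' : n ≤ (i : ℕ) := hi
    have hj' : n ≤ (j : ℕ) := hj
    change inner ℝ (v i) (v j) = _
    simp only [Set.restrict_apply, v, dif_pos hi', dif_pos hj']
    rw [← Submodule.coe_inner]
    rw [orthonormal_iff_ite.mp bV.orthonormal]
    simp only [Fin.mk.injEq, Subtype.mk.injEq]
    have h4 : ((i : ℕ) - n = (j : ℕ) - n) ↔ i = j :=
      ⟨fun h => Fin.ext (by omega), fun h => by rw [h]⟩
    simp [h4]
  obtain ⟨b, hb⟩ := hon.exists_orthonormalBasis_extension_of_card_eq
    (by rw [finrank_euclideanSpace_fin, Fintype.card_fin])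
  set Q : Matrix (Fin p) (Fin p) ℝ := Matrix.of (fun i k => b i k) with hQ
  have hQQ : Q * Qᵀ = 1 := by
    ext i j
    have h1 := orthonormal_iff_ite.mp b.orthonormal i j
    rw [PiLp.inner_apply] at h1
    simp only [RCLike.inner_apply, starRingEnd_apply, star_trivial] at h1
    rw [Matrix.mul_apply, Matrix.one_apply]
    simpa [hQ, Matrix.transpose_apply, mul_comm] using h1
  set Z' := Q * Z with hZ'
  have hZ'Z' : Z' * Z'ᵀ = 1 := by
    rw [hZ', Matrix.transpose_mul, Matrix.mul_assoc, ← Matrix.mul_assoc Z, hZ, Matrix.one_mul,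
      hQQ]
  let emb : Fin (p - n) → Fin p := fun a => ⟨n + a, by have := a.isLt; omega⟩
  set W : Matrix (Fin (p - n)) (Fin N) ℝ := Matrix.of (fun a j => Z' (emb a) j) with hW
  have hWrow : ∀ (a : Fin (p - n)), ∀ j ∈ J, W a j = 0 := by
    intro a j hj
    have hmem : v (emb a) ∈ V := hv_mem _ (by simp [emb])
    have hba : b (emb a) = v (emb a) := hb _ (by simp [emb])
    have h0 : f (v (emb a)) = 0 := LinearMap.mem_ker.mp hmem
    have h0' : (∑ i, (v (emb a)) i * Z i j) = 0 := congrFun h0 ⟨j, hj⟩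
    rw [hW]
    show Z' (emb a) j = 0
    rw [hZ', Matrix.mul_apply]
    rw [← h0']
    exact Finset.sum_congr rfl fun k _ => by rw [hQ]; simp [hba]
  have hWW : W * Wᵀ = 1 := by
    ext a c
    have h1 : (Z' * Z'ᵀ) (emb a) (emb c) = (1 : Matrix (Fin p) (Fin p) ℝ) (emb a) (emb c) := by
      rw [hZ'Z']
    rw [Matrix.mul_apply, Matrix.one_apply] at h1
    rw [Matrix.mul_apply, Matrix.one_apply]
    have hembinj : emb a = emb c ↔ a = c := by
      constructor
      · intro h
        have := congrArg (fun x : Fin p => (x : ℕ)) h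
        simp only [emb] at this
        exact Fin.ext (by omega)
      · intro h; rw [h]
    have h2 : (∑ j, W a j * Wᵀ j c) = if emb a = emb c then 1 else 0 := h1
    rw [h2]
    simp only [hembinj]

  -- the square factor matrix
  set X : Matrix (Fin n) (Fin n) ℝ := Matrix.of (fun (a b : Fin n) =>
    Z' ⟨(a : ℕ), lt_trans a.isLt hnp⟩ ((J.orderIsoOfFin hJcard b : Fin N))) with hX
  -- the key factorization
  have hfactor : ∀ S : Finset (Fin N), J ⊆ S →
      detSq Z S = (det X) ^ 2 * detSq W (S \ J) := by
    intro S hJS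
    have hnS : n ≤ S.card := hJcard ▸ Finset.card_le_card hJS
    by_cases hS : S.card = p
    · have hT : (S \ J).card = p - n := by rw [Finset.card_sdiff_of_subset hJS, hJcard, hS]
      have hcard : Fintype.card (Fin n ⊕ Fin (p - n)) = Fintype.card (Fin p) := by
        simp only [Fintype.card_sum, Fintype.card_fin]
        omega
      have hρ0inj : Function.Injective
          (Sum.elim (fun a : Fin n => (⟨(a : ℕ), lt_trans a.isLt hnp⟩ : Fin p)) emb) := by
        rintro (x | x) (y | y) h
        · have hv := congrArg Fin.val h
          simp only [Sum.elim_inl] at hv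
          exact congrArg Sum.inl (Fin.ext hv)
        · exfalso
          have hv := congrArg Fin.val h
          simp only [Sum.elim_inl, Sum.elim_inr, emb] at hv
          have := x.isLt
          omega
        · exfalso
          have hv := congrArg Fin.val h
          simp only [Sum.elim_inl, Sum.elim_inr, emb] at hv
          have := y.isLt
          omega
        · have hv := congrArg Fin.val h
          simp only [Sum.elim_inr, emb] at hv
          exact congrArg Sum.inr (Fin.ext (by omega))
      set ρ : (Fin n ⊕ Fin (p - n)) ≃ Fin p := Equiv.ofBijective _
        ((Fintype.bijective_iff_injective_and_card _).mpr ⟨hρ0inj, hcard⟩) with hρ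
      set e₂ : Fin n ⊕ Fin (p - n) → Fin N :=
        Sum.elim (fun a => ((J.orderIsoOfFin hJcard a : Fin N)))
          (fun c => (((S \ J).orderIsoOfFin hT c : Fin N))) with he₂
      have he₂S : ∀ x, e₂ x ∈ S := by
        rintro (x | x)
        · exact hJS (J.orderIsoOfFin hJcard x).2
        · exact Finset.sdiff_subset ((S \ J).orderIsoOfFin hT x).2
      have he₂inj : Function.Injective e₂ := by
        rintro (x | x) (y | y) h
        · exact congrArg Sum.inl ((J.orderIsoOfFin hJcard).injective (Subtype.coe_injective h))
        · exfalso
          have h1 := (J.orderIsoOfFin hJcard x).2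
          have h2 := ((S \ J).orderIsoOfFin hT y).2
          rw [Finset.mem_sdiff] at h2
          simp only [he₂, Sum.elim_inl, Sum.elim_inr] at h
          exact h2.2 (h ▸ h1)
        · exfalso
          have h1 := (J.orderIsoOfFin hJcard y).2
          have h2 := ((S \ J).orderIsoOfFin hT x).2
          rw [Finset.mem_sdiff] at h2
          simp only [he₂, Sum.elim_inl, Sum.elim_inr] at h
          exact h2.2 (h ▸ h1)
        · exact congrArg Sum.inr
            (((S \ J).orderIsoOfFin hT).injective (Subtype.coe_injective h))
      have hcolinj : Function.Injective
          (fun x => (S.orderIsoOfFin hS).symm ⟨e₂ x, he₂S x⟩) := by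
        intro x y h
        apply he₂inj
        have := congrArg (fun z => ((S.orderIsoOfFin hS z : Fin N))) h
        simpa using this
      set col : (Fin n ⊕ Fin (p - n)) ≃ Fin p := Equiv.ofBijective _
        ((Fintype.bijective_iff_injective_and_card _).mpr ⟨hcolinj, hcard⟩) with hcoldef
      have hcol : ∀ x, ((S.orderIsoOfFin hS (col x) : Fin N)) = e₂ x := by
        intro x
        show ((S.orderIsoOfFin hS) ((S.orderIsoOfFin hS).symm ⟨e₂ x, he₂S x⟩) : Fin N) = e₂ x
        rw [OrderIso.apply_symm_apply]
      set M : Matrix (Fin p) (Fin p) ℝ :=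
        Matrix.of (fun (i j : Fin p) => Z' i ((S.orderIsoOfFin hS j : Fin N))) with hM
      have hstep1 : detSq Z S = (det M) ^ 2 := by
        rw [detSq, dif_pos hS]
        have hMQ : M = Q * Matrix.of (fun (i j : Fin p) => Z i ((S.orderIsoOfFin hS j : Fin N))) := by
          ext i j
          rw [Matrix.mul_apply]
          show Z' i _ = _
          rw [hZ', Matrix.mul_apply]
          rfl
        have hdetQ2 : det Q ^ 2 = 1 := by
          have h5 := congrArg det hQQ
          rw [det_mul, det_transpose, det_one, ← pow_two] at h5
          exact h5
        rw [hMQ, det_mul, mul_pow, hdetQ2, one_mul]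
      set DD : Matrix (Fin (p - n)) (Fin (p - n)) ℝ :=
        Matrix.of (fun a c => W a (((S \ J).orderIsoOfFin hT c : Fin N))) with hDD
      set BB : Matrix (Fin n) (Fin (p - n)) ℝ :=
        Matrix.of (fun (a : Fin n) c => Z' ⟨(a : ℕ), lt_trans a.isLt hnp⟩
          (((S \ J).orderIsoOfFin hT c : Fin N))) with hBB
      have hblock : M.submatrix ρ col = Matrix.fromBlocks X BB 0 DD := by
        ext i j
        rcases i with a | a <;> rcases j with c | c
        · rw [Matrix.fromBlocks_apply₁₁, Matrix.submatrix_apply]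
          show Z' (ρ (Sum.inl a)) ((S.orderIsoOfFin hS (col (Sum.inl c)) : Fin N)) = X a c
          rw [hcol (Sum.inl c)]
          rfl
        · rw [Matrix.fromBlocks_apply₁₂, Matrix.submatrix_apply]
          show Z' (ρ (Sum.inl a)) ((S.orderIsoOfFin hS (col (Sum.inr c)) : Fin N)) = BB a c
          rw [hcol (Sum.inr c)]
          rfl
        · rw [Matrix.fromBlocks_apply₂₁, Matrix.submatrix_apply]
          show Z' (ρ (Sum.inr a)) ((S.orderIsoOfFin hS (col (Sum.inl c)) : Fin N)) =
            (0 : Matrix (Fin (p - n)) (Fin n) ℝ) a c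
          rw [hcol (Sum.inl c)]
          rw [Matrix.zero_apply]
          exact hWrow a _ (J.orderIsoOfFin hJcard c).2
        · rw [Matrix.fromBlocks_apply₂₂, Matrix.submatrix_apply]
          show Z' (ρ (Sum.inr a)) ((S.orderIsoOfFin hS (col (Sum.inr c)) : Fin N)) = DD a c
          rw [hcol (Sum.inr c)]
          rfl
      have hstep2 : (det M) ^ 2 = (det X * det DD) ^ 2 := by
        have h6 : |det (M.submatrix ρ col)| = |det M| := abs_det_submatrix_equiv_equiv ρ col M
        calc (det M) ^ 2 = |det M| ^ 2 := (sq_abs _).symm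
          _ = |det (M.submatrix ρ col)| ^ 2 := by rw [h6]
          _ = (det (M.submatrix ρ col)) ^ 2 := sq_abs _
          _ = (det X * det DD) ^ 2 := by rw [hblock, Matrix.det_fromBlocks_zero₂₁]
      have hstep3 : detSq W (S \ J) = (det DD) ^ 2 := by
        rw [detSq, dif_pos hT]
      rw [hstep1, hstep2, hstep3, mul_pow]
    · have hT : (S \ J).card ≠ p - n := by
        rw [Finset.card_sdiff_of_subset hJS, hJcard]
        omega
      rw [detSq, dif_neg hS, detSq, dif_neg hT, mul_zero]
  -- vanishing on non-disjoint T
  have hvanish : ∀ T : Finset (Fin N), ¬ Disjoint T J → detSq W T = 0 := by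
    intro T hTJ
    by_cases hc : T.card = p - n
    · obtain ⟨j, hjT, hjJ⟩ := Finset.not_disjoint_iff.mp hTJ
      rw [detSq, dif_pos hc]
      have h0 : det (Matrix.of fun (i k : Fin (p - n)) => W i ((T.orderIsoOfFin hc k : Fin N))) = 0 := by
        apply Matrix.det_eq_zero_of_column_eq_zero ((T.orderIsoOfFin hc).symm ⟨j, hjT⟩)
        intro i
        show W i ((T.orderIsoOfFin hc ((T.orderIsoOfFin hc).symm ⟨j, hjT⟩) : Fin N)) = 0
        rw [OrderIso.apply_symm_apply]
        exact hWrow i j hjJ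
      rw [h0]
      norm_num
    · rw [detSq, dif_neg hc]
  -- main summation identity
  have hconv : ∀ {q' : ℕ} (Y : Matrix (Fin q') (Fin N) ℝ) (P : Finset (Fin N) → Prop)
      (_ : DecidablePred P),
      prDP Y {S | P S} = ∑ S ∈ Finset.univ.filter P, detSq Y S := by
    intro q' Y P _
    rw [prDP, Finset.sum_filter]
    refine Finset.sum_congr rfl fun S _ => ?_
    by_cases h : P S
    · rw [if_pos (show S ∈ {S | P S} from h), if_pos h]
    · rw [if_neg (show S ∉ {S | P S} from h), if_neg h]
  have main : ∀ K : Finset (Fin N), Disjoint K J →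
      prDP Z {S | J ∪ K ⊆ S} = (det X) ^ 2 * prDP W {T | K ⊆ T} := by
    intro K hK
    rw [hconv Z (fun S => J ∪ K ⊆ S) (by infer_instance), hconv W (fun T => K ⊆ T) (by infer_instance)]
    have h8 : (∑ S ∈ Finset.univ.filter (fun S : Finset (Fin N) => J ∪ K ⊆ S), detSq W (S \ J))
        = ∑ T ∈ Finset.univ.filter
            (fun T : Finset (Fin N) => K ⊆ T ∧ _root_.Disjoint T J), detSq W T := by
      refine Finset.sum_nbij' (fun S => S \ J) (fun T => T ∪ J) ?_ ?_ ?_ ?_ ?_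
      · intro S hS
        rw [Finset.mem_filter] at hS ⊢
        refine ⟨Finset.mem_univ _, ?_, Finset.sdiff_disjoint⟩
        rw [Finset.subset_sdiff]
        exact ⟨(Finset.union_subset_iff.mp hS.2).2, hK⟩
      · intro T hT
        rw [Finset.mem_filter] at hT ⊢
        exact ⟨Finset.mem_univ _, Finset.union_subset
          (Finset.subset_union_right) (hT.2.1.trans Finset.subset_union_left)⟩
      · intro S hS
        rw [Finset.mem_filter] at hS
        exact Finset.sdiff_union_of_subset ((Finset.union_subset_iff.mp hS.2).1)
      · intro T hT
        rw [Finset.mem_filter] at hT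
        exact Finset.union_sdiff_cancel_right hT.2.2
      · intro S _
        rfl
    calc (∑ S ∈ Finset.univ.filter (fun S : Finset (Fin N) => J ∪ K ⊆ S), detSq Z S)
        = ∑ S ∈ Finset.univ.filter (fun S : Finset (Fin N) => J ∪ K ⊆ S),
            (det X) ^ 2 * detSq W (S \ J) := by
          refine Finset.sum_congr rfl fun S hS => ?_
          rw [Finset.mem_filter] at hS
          exact hfactor S (Finset.union_subset_iff.mp hS.2).1
      _ = (det X) ^ 2 * ∑ S ∈ Finset.univ.filter
            (fun S : Finset (Fin N) => J ∪ K ⊆ S), detSq W (S \ J) := by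
          rw [Finset.mul_sum]
      _ = (det X) ^ 2 * ∑ T ∈ Finset.univ.filter
            (fun T : Finset (Fin N) => K ⊆ T ∧ _root_.Disjoint T J), detSq W T := by rw [h8]
      _ = (det X) ^ 2 * ∑ T ∈ Finset.univ.filter
            (fun T : Finset (Fin N) => K ⊆ T), detSq W T := by
          congr 1
          refine Finset.sum_subset (fun T hT => ?_) (fun T hT1 hT2 => ?_)
          · rw [Finset.mem_filter] at hT ⊢
            exact ⟨Finset.mem_univ _, hT.2.1⟩
          · rw [Finset.mem_filter] at hT1 hT2
            apply hvanish
            intro hd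
            exact hT2 ⟨Finset.mem_univ _, hT1.2, hd⟩
  refine ⟨W, hWW, hWrow, ?_⟩
  intro K hK
  have base : prDP Z {S | J ⊆ S} = (det X) ^ 2 := by
    have h0 := main ∅ (Finset.disjoint_empty_left J)
    simp only [Finset.union_empty] at h0
    have h1 : prDP W {T | (∅ : Finset (Fin N)) ⊆ T} = 1 := by
      rw [prDP]
      simp only [Set.mem_setOf_eq, Finset.empty_subset, if_true]
      exact sum_detSq_eq_one W hWW
    rw [h1, mul_one] at h0
    exact h0
  rw [main K hK, base]
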